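/- arXiv:2105.13816 — 3 statements merged into one kernel-verified Lean document; each statement's English description precedes it below -/
import Mathlib

section
/- The columns of the 5×5 prediction recurrence matrix P (arising from the γ = 1 wavelet prediction) satisfy ∑_{m=-2}^{2} m^s · P_{m+2, j} = 2^{1-s} (j-2)^s for all j = 0,...,4 and s = 0, 1, 2, 3. -/
private lemma fin5_3 : (((3 : Fin 5) : ℕ) : ℝ) = 3 := by
  norm_num [show ((3 : Fin 5) : ℕ) = 3 from rfl]

private lemma fin5_4 : (((4 : Fin 5) : ℕ) : ℝ) = 4 := by
  norm_num [show ((4 : Fin 5) : ℕ) = 4 from rfl]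

/-- Column moment identity for the 5×5 recurrence matrix `P` of the γ = 1 prediction:
`∑_{m=-2}^{2} m^s P_{m+2, j} = 2^{1-s} (j-2)^s` for `j = 0,…,4` and `s = 0,1,2,3`. -/
theorem gamma_one_matrix_column_moments :
    let P : Matrix (Fin 5) (Fin 5) ℝ :=
      !![0, -1/8, 0, 0, 0;
         2, 9/8, 0, -1/8, 0;
         0, 9/8, 2, 9/8, 0;
         0, -1/8, 0, 9/8, 2;
         0, 0, 0, -1/8, 0]
    ∀ j : Fin 5, ∀ s : ℕ, s ≤ 3 →
      ∑ i : Fin 5, (((i : ℕ) : ℝ) - 2) ^ s * P i j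
        = 2 / 2 ^ s * (((j : ℕ) : ℝ) - 2) ^ s := by
  intro P j s hs
  interval_cases s <;> fin_cases j <;>
    simp [P, Fin.sum_univ_five, Matrix.vecHead, Matrix.vecTail] <;>
    norm_num [fin5_3, fin5_4]
end

section
/- If a vector of weights (C_m)_{m=-2}^{2} satisfies ∑_m C_m = 0, ∑_m m C_m = -c, ∑_m m² C_m = c²/2^{k}, and ∑_m m³ C_m = -c³/4^{k} for some integer k ≥ 0, and C' = P·C where P is the γ=1 recurrence matrix, then C' satisfies the same four identities with k replaced by k+1. -/
/-!
The monomial vectors `m ↦ m ^ j`, `j ≤ 3`, are left eigenvectors of `P` with eigenvalue `2 ^ (1 - j)`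
(the odd columns of `P` carry the weights `-1/8, 9/8, 9/8, -1/8` of the four-point interpolatory
subdivision rule, which reproduces cubics). Hence the `j`-th moment of `P C` is `2 ^ (1 - j)` times
that of `C`: the zeroth moment stays `0`, the first stays `-c`, the second halves and the third
is divided by four.
-/

open Matrix

namespace GammaOneRecurrence

noncomputable def transitionMatrix : Matrix (Fin 5) (Fin 5) ℝ :=
  !![0, -1/8, 0, 0, 0;
     2, 9/8, 0, -1/8, 0;
     0, 9/8, 2, 9/8, 0;
     0, -1/8, 0, 9/8, 2;
     0, 0, 0, -1/8, 0]

/-- Index `i : Fin 5` stands for `m = i - 2`. -/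
noncomputable def monomial (j : ℕ) : Fin 5 → ℝ := fun i => (((i : ℕ) : ℝ) - 2) ^ j

theorem monomial_vecMul_transitionMatrix {j : ℕ} (hj : j ≤ 3) :
    monomial j ᵥ* transitionMatrix = (2 / 2 ^ j : ℝ) • monomial j := by
  interval_cases j <;> ext i <;> fin_cases i <;>
    norm_num [monomial, transitionMatrix, vecMul, dotProduct, Fin.sum_univ_five,
      cons_val_two, cons_val_three, cons_val_four]

theorem moment_transitionMatrix_mulVec {j : ℕ} (hj : j ≤ 3) (C : Fin 5 → ℝ) :
    ∑ i : Fin 5, (((i : ℕ) : ℝ) - 2) ^ j * (transitionMatrix *ᵥ C) i =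
      2 / 2 ^ j * ∑ i : Fin 5, (((i : ℕ) : ℝ) - 2) ^ j * C i := by
  change monomial j ⬝ᵥ (transitionMatrix *ᵥ C) = 2 / 2 ^ j * (monomial j ⬝ᵥ C)
  rw [dotProduct_mulVec, monomial_vecMul_transitionMatrix hj, smul_dotProduct, smul_eq_mul]

end GammaOneRecurrence

open GammaOneRecurrence in
/-- One step of the γ = 1 recurrence preserves the four moment identities,
incrementing the parameter `k` by one. -/
theorem gamma_one_recurrence_step (c : ℤ) (k : ℕ) (C : Fin 5 → ℝ)
    (h0 : ∑ i : Fin 5, C i = 0)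
    (h1 : ∑ i : Fin 5, (((i : ℕ) : ℝ) - 2) * C i = -(c : ℝ))
    (h2 : ∑ i : Fin 5, (((i : ℕ) : ℝ) - 2) ^ 2 * C i = (c : ℝ) ^ 2 / 2 ^ k)
    (h3 : ∑ i : Fin 5, (((i : ℕ) : ℝ) - 2) ^ 3 * C i = -((c : ℝ) ^ 3) / 4 ^ k) :
    let P : Matrix (Fin 5) (Fin 5) ℝ :=
      !![0, -1/8, 0, 0, 0;
         2, 9/8, 0, -1/8, 0;
         0, 9/8, 2, 9/8, 0;
         0, -1/8, 0, 9/8, 2;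
         0, 0, 0, -1/8, 0]
    let C' : Fin 5 → ℝ := P.mulVec C
    (∑ i : Fin 5, C' i = 0) ∧
    (∑ i : Fin 5, (((i : ℕ) : ℝ) - 2) * C' i = -(c : ℝ)) ∧
    (∑ i : Fin 5, (((i : ℕ) : ℝ) - 2) ^ 2 * C' i = (c : ℝ) ^ 2 / 2 ^ (k + 1)) ∧
    (∑ i : Fin 5, (((i : ℕ) : ℝ) - 2) ^ 3 * C' i = -((c : ℝ) ^ 3) / 4 ^ (k + 1)) := by
  intro P C'
  have hC' : C' = transitionMatrix *ᵥ C := rfl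
  have m0 := moment_transitionMatrix_mulVec (j := 0) (by norm_num) C
  have m1 := moment_transitionMatrix_mulVec (j := 1) (by norm_num) C
  have m2 := moment_transitionMatrix_mulVec (j := 2) (by norm_num) C
  have m3 := moment_transitionMatrix_mulVec (j := 3) (by norm_num) C
  simp only [pow_zero, pow_one, one_mul] at m0 m1
  rw [hC']
  refine ⟨?_, ?_, ?_, ?_⟩
  · rw [m0, h0]; norm_num
  · rw [m1, h1]; norm_num
  · rw [m2, h2]; field_simp; ring
  · rw [m3, h3, show (4 : ℝ) = 2 ^ 2 by norm_num]; field_simp; ring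
end

section
/- For γ = 1 and any level difference Δℓ ≥ 0, the flattened stream weights C_{Δℓ} = P^{Δℓ} C_0, where C_0 has C_{0,-c} = 1, C_{0,0} = -1 and zeros elsewhere, satisfy ∑_m C_{Δℓ,m} = 0, ∑_m m C_{Δℓ,m} = -c, ∑_m m² C_{Δℓ,m} = c²/2^{Δℓ}, and ∑_m m³ C_{Δℓ,m} = -c³/4^{Δℓ}; i.e., the γ = 1 adaptive stream phase matches the reference scheme up to order 3. -/
/-- γ = 1 flattened stream weights `C_{Δℓ} = P^{Δℓ} C₀` match the reference scheme
up to order 3, for every level difference `Δℓ`. -/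
theorem gamma_one_match_up_to_order_three (c : ℤ) (hc1 : 1 ≤ |c|) (hc2 : |c| ≤ 2) :
    let P : Matrix (Fin 5) (Fin 5) ℝ :=
      !![0, -1/8, 0, 0, 0;
         2, 9/8, 0, -1/8, 0;
         0, 9/8, 2, 9/8, 0;
         0, -1/8, 0, 9/8, 2;
         0, 0, 0, -1/8, 0]
    let C0 : Fin 5 → ℝ := fun i =>
      if ((i : ℕ) : ℤ) = -c + 2 then 1 else if ((i : ℕ) : ℤ) = 2 then -1 else 0
    ∀ Δ : ℕ,
      (∑ i : Fin 5, (P ^ Δ).mulVec C0 i = 0) ∧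
      (∑ i : Fin 5, (((i : ℕ) : ℝ) - 2) * (P ^ Δ).mulVec C0 i = -(c : ℝ)) ∧
      (∑ i : Fin 5, (((i : ℕ) : ℝ) - 2) ^ 2 * (P ^ Δ).mulVec C0 i
          = (c : ℝ) ^ 2 / 2 ^ Δ) ∧
      (∑ i : Fin 5, (((i : ℕ) : ℝ) - 2) ^ 3 * (P ^ Δ).mulVec C0 i
          = -((c : ℝ) ^ 3) / 4 ^ Δ) := by
  intro P C0 Δ
  induction Δ with
  | zero =>
    have hcases : c = -2 ∨ c = -1 ∨ c = 1 ∨ c = 2 := by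
      rcases abs_le.mp hc2 with ⟨h1, h2⟩
      rcases le_abs.mp hc1 with h | h <;> omega
    simp only [pow_zero, Matrix.one_mulVec, C0, Fin.sum_univ_five]
    rcases hcases with rfl | rfl | rfl | rfl <;>
      norm_num [show ((3:Fin 5):ℕ) = 3 from rfl, show ((4:Fin 5):ℕ) = 4 from rfl]
  | succ n ih =>
    obtain ⟨h0, h1, h2, h3⟩ := ih
    rw [pow_succ']
    rw [← Matrix.mulVec_mulVec]
    set v := (P ^ n).mulVec C0 with hv
    simp only [Fin.sum_univ_five] at h0 h1 h2 h3 ⊢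
    simp only [P, Matrix.mulVec, dotProduct, Fin.sum_univ_five,
      Matrix.cons_val_zero, Matrix.cons_val_one, Matrix.head_cons,
      Matrix.cons_val_two, Matrix.tail_cons, Matrix.cons_val_three,
      Matrix.cons_val_four, Matrix.head_fin_const, Matrix.cons_val', Matrix.empty_val',
      Matrix.cons_val_fin_one, Matrix.of_apply,
      show ((3:Fin 5):ℕ) = 3 from rfl, show ((4:Fin 5):ℕ) = 4 from rfl] at h0 h1 h2 h3 ⊢
    norm_num at h0 h1 h2 h3 ⊢
    refine ⟨by linarith, by linarith, ?_, ?_⟩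
    · linear_combination (1/2 : ℝ) * h2
    · linear_combination (1/4 : ℝ) * h3
end
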